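/- arXiv:1612.01290 — 2 statements merged into one kernel-verified Lean document; each statement's English description precedes it below -/
import Mathlib

section
/- Let n ≥ 2 and let f, g, h : U → ℂ be holomorphic and nonvanishing on an open set U ⊆ ℂ with fⁿ + gⁿ + hⁿ = 1. Then the common value Φ := (g'·D²h - h'·D²g)/f^{n-1} equals the 3×3 determinant det[[f, g, h], [f', g', h'], [D²f, D²g, D²h]], where D²F := F'' + (n-1)·(F')²/F. -/
/-!
Differentiating `fⁿ + gⁿ + hⁿ = 1` once and twice gives `∑ fⁿ⁻¹ f' = 0` and `∑ fⁿ⁻¹ D²f = 0`,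
since `(fⁿ⁻¹ f')' = fⁿ⁻¹ D²f`. Hence the matrix `M` with rows `(f, g, h)`, `(f', g', h')`,
`(D²f, D²g, D²h)` sends `(fⁿ⁻¹, gⁿ⁻¹, hⁿ⁻¹)` to `(1, 0, 0)`, and Cramer's rule in the first
coordinate gives `fⁿ⁻¹ · det M = g' D²h - h' D²g`.
-/

open Filter Matrix

theorem HasDerivAt.eq_zero_of_eqOn_const {𝕜 E : Type*} [NontriviallyNormedField 𝕜]
    [NormedAddCommGroup E] [NormedSpace 𝕜 E] {φ : 𝕜 → E} {φ' c : E} {U : Set 𝕜} {z : 𝕜}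
    (hφ : HasDerivAt φ φ' z) (hU : IsOpen U) (hz : z ∈ U) (hc : ∀ w ∈ U, φ w = c) :
    φ' = 0 :=
  hφ.unique <| (hasDerivAt_const z c).congr_of_eventuallyEq <|
    eventually_of_mem (hU.mem_nhds hz) hc

theorem Matrix.det_updateCol_mulVec {n α : Type*} [Fintype n] [DecidableEq n] [CommRing α]
    (A : Matrix n n α) (v : n → α) (i : n) :
    (A.updateCol i (A *ᵥ v)).det = v i * A.det := by
  rw [← cramer_apply, cramer_eq_adjugate_mulVec, mulVec_mulVec, adjugate_mul, smul_mulVec,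
    one_mulVec, Pi.smul_apply, smul_eq_mul, mul_comm]

theorem Matrix.mul_det_fin_three_of_mulVec_eq {α : Type*} [CommRing α]
    (A : Matrix (Fin 3) (Fin 3) α) (v : Fin 3 → α) (hv : A *ᵥ v = ![1, 0, 0]) :
    v 0 * A.det = A 1 1 * A 2 2 - A 1 2 * A 2 1 := by
  rw [← det_updateCol_mulVec, hv, det_fin_three]
  simp

/-- The paper's `D²F`; away from the zeros of `F` it equals `(F ^ (n - 1) * F')' / F ^ (n - 1)`. -/
noncomputable def twistedSecondDeriv (n : ℕ) (F : ℂ → ℂ) (z : ℂ) : ℂ :=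
  deriv (deriv F) z + (n - 1 : ℂ) * deriv F z ^ 2 / F z

section

variable {U : Set ℂ} {z : ℂ}

theorem hasDerivAt_pow_mul_deriv {F : ℂ → ℂ} (hU : IsOpen U) (hF : DifferentiableOn ℂ F U)
    (hz : z ∈ U) (hFz : F z ≠ 0) (k : ℕ) :
    HasDerivAt (fun w => F w ^ k * deriv F w) (F z ^ k * twistedSecondDeriv (k + 1) F z) z := by
  have hF' : HasDerivAt F (deriv F z) z := (hF.differentiableAt (hU.mem_nhds hz)).hasDerivAt
  have hF'' : HasDerivAt (deriv F) (deriv (deriv F) z) z :=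
    ((hF.analyticOnNhd hU).deriv z hz).differentiableAt.hasDerivAt
  refine ((hF'.pow k).mul hF'').congr_deriv ?_
  rcases k with _ | k
  · simp [twistedSecondDeriv]
  · simp only [twistedSecondDeriv, Nat.add_sub_cancel, Pi.pow_apply]
    push_cast
    field_simp
    ring

variable {ι : Type*} (s : Finset ι) {F : ι → ℂ → ℂ} {k : ℕ} {c : ℂ}

theorem sum_pow_mul_deriv_eq_zero (hU : IsOpen U) (hF : ∀ i ∈ s, DifferentiableOn ℂ (F i) U)
    (hsum : ∀ w ∈ U, ∑ i ∈ s, F i w ^ (k + 1) = c) (hz : z ∈ U) :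
    ∑ i ∈ s, F i z ^ k * deriv (F i) z = 0 := by
  have hderiv := HasDerivAt.sum fun i hi =>
    ((hF i hi).differentiableAt (hU.mem_nhds hz)).hasDerivAt.pow (k + 1)
  have h0 := hderiv.eq_zero_of_eqOn_const hU hz (by simpa using hsum)
  simp only [Nat.add_sub_cancel, mul_assoc, ← Finset.mul_sum] at h0
  exact (mul_eq_zero.mp h0).resolve_left (Nat.cast_ne_zero.mpr k.succ_ne_zero)

theorem sum_pow_mul_twistedSecondDeriv_eq_zero (hU : IsOpen U)
    (hF : ∀ i ∈ s, DifferentiableOn ℂ (F i) U) (hsum : ∀ w ∈ U, ∑ i ∈ s, F i w ^ (k + 1) = c)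
    (hz : z ∈ U) (hFz : ∀ i ∈ s, F i z ≠ 0) :
    ∑ i ∈ s, F i z ^ k * twistedSecondDeriv (k + 1) (F i) z = 0 :=
  (HasDerivAt.sum fun i hi => hasDerivAt_pow_mul_deriv hU (hF i hi) hz (hFz i hi) k)
    |>.eq_zero_of_eqOn_const hU hz fun w hw => by
      simpa using sum_pow_mul_deriv_eq_zero s hU hF hsum hw

end

theorem phi_determinant_general (n : ℕ) (U : Set ℂ) (hU : IsOpen U)
    (f g h : ℂ → ℂ)
    (hf : DifferentiableOn ℂ f U) (hg : DifferentiableOn ℂ g U)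
    (hh : DifferentiableOn ℂ h U)
    (hnz : ∀ z ∈ U, f z ≠ 0 ∧ g z ≠ 0 ∧ h z ≠ 0)
    (heq : ∀ z ∈ U, f z ^ n + g z ^ n + h z ^ n = 1) :
    ∀ z ∈ U,
      (deriv g z * (deriv (deriv h) z + (n - 1 : ℂ) * (deriv h z) ^ 2 / h z)
        - deriv h z * (deriv (deriv g) z + (n - 1 : ℂ) * (deriv g z) ^ 2 / g z))
        / f z ^ (n - 1)
      = Matrix.det
          !![f z, g z, h z;
             deriv f z, deriv g z, deriv h z;
             deriv (deriv f) z + (n - 1 : ℂ) * (deriv f z) ^ 2 / f z,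
               deriv (deriv g) z + (n - 1 : ℂ) * (deriv g z) ^ 2 / g z,
               deriv (deriv h) z + (n - 1 : ℂ) * (deriv h z) ^ 2 / h z] := by
  intro z hz
  obtain ⟨hfz, hgz, hhz⟩ := hnz z hz
  obtain ⟨k, rfl⟩ : ∃ k, n = k + 1 := Nat.exists_eq_add_one.mpr <| Nat.pos_of_ne_zero <| by
    rintro rfl
    exact absurd (heq z hz) (by norm_num)
  have hF : ∀ i ∈ Finset.univ, DifferentiableOn ℂ (![f, g, h] i) U := by
    simp [Fin.forall_fin_succ, hf, hg, hh]
  have hsum : ∀ w ∈ U, ∑ i, ![f, g, h] i w ^ (k + 1) = 1 := by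
    simpa [Fin.sum_univ_three] using heq
  have hfirst := sum_pow_mul_deriv_eq_zero _ hU hF hsum hz
  have hsecond := sum_pow_mul_twistedSecondDeriv_eq_zero _ hU hF hsum hz
    (by simp [Fin.forall_fin_succ, hfz, hgz, hhz])
  simp only [Fin.sum_univ_three, cons_val_zero, cons_val_one, cons_val] at hfirst hsecond
  set D := twistedSecondDeriv (k + 1)
  have hv : !![f z, g z, h z; deriv f z, deriv g z, deriv h z; D f z, D g z, D h z]
      *ᵥ ![f z ^ k, g z ^ k, h z ^ k] = ![1, 0, 0] := by
    ext i
    fin_cases i <;> simp only [mulVec, dotProduct, Fin.sum_univ_three, of_apply, cons_val',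
      cons_val_fin_one, cons_val_zero, cons_val_one, cons_val, Fin.zero_eta, Fin.mk_one,
      Fin.reduceFinMk]
    · linear_combination heq z hz
    · linear_combination hfirst
    · linear_combination hsecond
  have key := Matrix.mul_det_fin_three_of_mulVec_eq _ _ hv
  simp only [of_apply, cons_val', cons_val_zero, cons_val_one, cons_val_two, cons_val_fin_one] at key
  rw [Nat.add_sub_cancel, div_eq_iff (pow_ne_zero _ hfz)]
  exact key.symm.trans (mul_comm _ _)

theorem phi_determinant (n : ℕ) (hn : 2 ≤ n) (U : Set ℂ) (hU : IsOpen U)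
    (f g h : ℂ → ℂ)
    (hf : DifferentiableOn ℂ f U) (hg : DifferentiableOn ℂ g U)
    (hh : DifferentiableOn ℂ h U)
    (hnz : ∀ z ∈ U, f z ≠ 0 ∧ g z ≠ 0 ∧ h z ≠ 0)
    (heq : ∀ z ∈ U, f z ^ n + g z ^ n + h z ^ n = 1) :
    ∀ z ∈ U,
      (deriv g z * (deriv (deriv h) z + (n - 1 : ℂ) * (deriv h z) ^ 2 / h z)
        - deriv h z * (deriv (deriv g) z + (n - 1 : ℂ) * (deriv g z) ^ 2 / g z))
        / f z ^ (n - 1)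
      = Matrix.det
          !![f z, g z, h z;
             deriv f z, deriv g z, deriv h z;
             deriv (deriv f) z + (n - 1 : ℂ) * (deriv f z) ^ 2 / f z,
               deriv (deriv g) z + (n - 1 : ℂ) * (deriv g z) ^ 2 / g z,
               deriv (deriv h) z + (n - 1 : ℂ) * (deriv h z) ^ 2 / h z] :=
  phi_determinant_general n U hU f g h hf hg hh hnz heq
end

section
/- Let n ≥ 2 and let f, g, h : U → ℂ be holomorphic on an open set U ⊆ ℂ with fⁿ + gⁿ + hⁿ = 1 and f nonvanishing and g nonvanishing on U. Then W(fⁿ, gⁿ, hⁿ) = n²·f^{n-1}·g^{n-1}·(f'·D²g - g'·D²f) on U, where D²F := F'' + (n-1)·(F')²/F and W denotes the 3×3 Wronskian determinant. -/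
/-!
Put `F = fⁿ`, `G = gⁿ`, `H = hⁿ`. Near each point of `U` we have `H = 1 - F - G`, so after
adding the first two columns of the Wronskian matrix to the third, that column becomes `(1, 0, 0)`
and `W(F, G, H) = F' G'' - F'' G'`. Finally `F' = n f^{n-1} f'` and `F'' = n f^{n-1} D²f` (this
is where `f ≠ 0` enters), and likewise for `G`, which gives the identity.
-/

open Filter Topology

theorem Matrix.det_fin_three_of_add_eq {R : Type*} [CommRing R] {a b c a' b' c' a'' b'' c'' : R}
    (h₀ : a + b + c = 1) (h₁ : a' + b' + c' = 0) (h₂ : a'' + b'' + c'' = 0) :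
    !![a, b, c; a', b', c'; a'', b'', c''].det = a' * b'' - a'' * b' := by
  obtain rfl : c = 1 - a - b := by linear_combination h₀
  obtain rfl : c' = -a' - b' := by linear_combination h₁
  obtain rfl : c'' = -a'' - b'' := by linear_combination h₂
  simp only [Matrix.det_fin_three, Matrix.of_apply, Matrix.cons_val', Matrix.cons_val_zero,
    Matrix.cons_val_fin_one, Matrix.cons_val_one, Matrix.cons_val]
  ring

variable {𝕜 : Type*} [NontriviallyNormedField 𝕜]

noncomputable def wronskian (F G H : 𝕜 → 𝕜) (z : 𝕜) : 𝕜 :=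
  !![F z, G z, H z;
     deriv F z, deriv G z, deriv H z;
     deriv (deriv F) z, deriv (deriv G) z, deriv (deriv H) z].det

/-- The paper's `D²φ = φ'' + (n - 1) φ'² / φ`, chosen so that `(φⁿ)'' = n φ^(n-1) D²φ`. -/
noncomputable def jetD2 (n : ℕ) (φ : 𝕜 → 𝕜) (z : 𝕜) : 𝕜 :=
  deriv (deriv φ) z + (n - 1 : 𝕜) * deriv φ z ^ 2 / φ z

section Pow

variable {φ : 𝕜 → 𝕜} {z : 𝕜}

theorem deriv_pow_eventuallyEq (hφ : ∀ᶠ w in 𝓝 z, DifferentiableAt 𝕜 φ w) (n : ℕ) :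
    deriv (fun w => φ w ^ n) =ᶠ[𝓝 z] fun w => n * φ w ^ (n - 1) * deriv φ w :=
  hφ.mono fun _ hw => deriv_fun_pow hw n

theorem differentiableAt_deriv_pow (hφ : ∀ᶠ w in 𝓝 z, DifferentiableAt 𝕜 φ w)
    (hφ' : DifferentiableAt 𝕜 (deriv φ) z) (n : ℕ) :
    DifferentiableAt 𝕜 (deriv fun w => φ w ^ n) z :=
  ((differentiableAt_const _).mul (hφ.self_of_nhds.pow _) |>.mul hφ').congr_of_eventuallyEq
    (deriv_pow_eventuallyEq hφ n)

theorem deriv_deriv_pow (hφ : ∀ᶠ w in 𝓝 z, DifferentiableAt 𝕜 φ w)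
    (hφ' : DifferentiableAt 𝕜 (deriv φ) z) (hz : φ z ≠ 0) (n : ℕ) :
    deriv (deriv fun w => φ w ^ n) z = n * φ z ^ (n - 1) * jetD2 n φ z := by
  have hφz := hφ.self_of_nhds
  have hpow : DifferentiableAt 𝕜 (fun w => φ w ^ (n - 1)) z := hφz.pow _
  simp only [(deriv_pow_eventuallyEq hφ n).deriv_eq, mul_assoc]
  rw [deriv_const_mul _ (hpow.fun_mul hφ'), deriv_fun_mul hpow hφ', deriv_fun_pow hφz, jetD2]
  -- `n - 1 - 1` truncates for `n ≤ 1`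
  rcases n with _ | _ | k
  · simp
  · simp
  · field_simp
    push_cast
    ring

end Pow

theorem wronskian_eq_of_eventuallyEq_one_sub_sub {F G H : 𝕜 → 𝕜} {z : 𝕜}
    (hH : H =ᶠ[𝓝 z] fun w => 1 - F w - G w)
    (hF : ∀ᶠ w in 𝓝 z, DifferentiableAt 𝕜 F w) (hG : ∀ᶠ w in 𝓝 z, DifferentiableAt 𝕜 G w)
    (hF' : DifferentiableAt 𝕜 (deriv F) z) (hG' : DifferentiableAt 𝕜 (deriv G) z) :
    wronskian F G H z = deriv F z * deriv (deriv G) z - deriv (deriv F) z * deriv G z := by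
  have hH' : deriv H =ᶠ[𝓝 z] fun w => -deriv F w - deriv G w := by
    filter_upwards [hH.eventuallyEq_nhds, hF, hG] with w hw hFw hGw
    rw [hw.deriv_eq, deriv_fun_sub ((differentiableAt_const _).fun_sub hFw) hGw,
      deriv_fun_sub (differentiableAt_const _) hFw, deriv_const]
    ring
  have hH'' : deriv (deriv H) z = -deriv (deriv F) z - deriv (deriv G) z := by
    rw [hH'.deriv_eq, deriv_fun_sub hF'.fun_neg hG', deriv.fun_neg]
  apply Matrix.det_fin_three_of_add_eq
  · rw [hH.self_of_nhds]; ring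
  · rw [hH'.self_of_nhds]; ring
  · rw [hH'']; ring

theorem wronskian_jet_identity_general (n : ℕ) (U : Set ℂ) (hU : IsOpen U)
    (f g h : ℂ → ℂ)
    (hf : DifferentiableOn ℂ f U) (hg : DifferentiableOn ℂ g U)
    (hf' : DifferentiableOn ℂ (deriv f) U) (hg' : DifferentiableOn ℂ (deriv g) U)
    (hfz : ∀ z ∈ U, f z ≠ 0) (hgz : ∀ z ∈ U, g z ≠ 0)
    (heq : ∀ z ∈ U, f z ^ n + g z ^ n + h z ^ n = 1) :
    ∀ z ∈ U,
      Matrix.det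
        !![f z ^ n, g z ^ n, h z ^ n;
           deriv (fun w => f w ^ n) z, deriv (fun w => g w ^ n) z,
             deriv (fun w => h w ^ n) z;
           deriv (deriv (fun w => f w ^ n)) z, deriv (deriv (fun w => g w ^ n)) z,
             deriv (deriv (fun w => h w ^ n)) z]
      = (n : ℂ) ^ 2 * f z ^ (n - 1) * g z ^ (n - 1)
        * (deriv f z * (deriv (deriv g) z + (n - 1 : ℂ) * (deriv g z) ^ 2 / g z)
          - deriv g z * (deriv (deriv f) z + (n - 1 : ℂ) * (deriv f z) ^ 2 / f z)) := by
  intro z hz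
  have hUz : ∀ᶠ w in 𝓝 z, w ∈ U := hU.mem_nhds hz
  have hfd : ∀ᶠ w in 𝓝 z, DifferentiableAt ℂ f w :=
    hUz.mono fun w hw => hf.differentiableAt (hU.mem_nhds hw)
  have hgd : ∀ᶠ w in 𝓝 z, DifferentiableAt ℂ g w :=
    hUz.mono fun w hw => hg.differentiableAt (hU.mem_nhds hw)
  have hf'd := hf'.differentiableAt hUz
  have hg'd := hg'.differentiableAt hUz
  have hH : (fun w => h w ^ n) =ᶠ[𝓝 z] fun w => 1 - f w ^ n - g w ^ n :=
    hUz.mono fun w hw => by linear_combination heq w hw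
  have hW := wronskian_eq_of_eventuallyEq_one_sub_sub hH
    (hfd.mono fun _ hw => hw.pow n) (hgd.mono fun _ hw => hw.pow n)
    (differentiableAt_deriv_pow hfd hf'd n) (differentiableAt_deriv_pow hgd hg'd n)
  rw [wronskian] at hW
  rw [hW, deriv_deriv_pow hfd hf'd (hfz z hz), deriv_deriv_pow hgd hg'd (hgz z hz),
    deriv_fun_pow hfd.self_of_nhds, deriv_fun_pow hgd.self_of_nhds, jetD2, jetD2]
  ring

theorem wronskian_jet_identity (n : ℕ) (hn : 2 ≤ n) (U : Set ℂ) (hU : IsOpen U)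
    (f g h : ℂ → ℂ)
    (hf : DifferentiableOn ℂ f U) (hg : DifferentiableOn ℂ g U)
    (hh : DifferentiableOn ℂ h U)
    (hf' : DifferentiableOn ℂ (deriv f) U) (hg' : DifferentiableOn ℂ (deriv g) U)
    (hh' : DifferentiableOn ℂ (deriv h) U)
    (hfz : ∀ z ∈ U, f z ≠ 0) (hgz : ∀ z ∈ U, g z ≠ 0)
    (heq : ∀ z ∈ U, f z ^ n + g z ^ n + h z ^ n = 1) :
    ∀ z ∈ U,
      Matrix.det
        !![f z ^ n, g z ^ n, h z ^ n;
           deriv (fun w => f w ^ n) z, deriv (fun w => g w ^ n) z,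
             deriv (fun w => h w ^ n) z;
           deriv (deriv (fun w => f w ^ n)) z, deriv (deriv (fun w => g w ^ n)) z,
             deriv (deriv (fun w => h w ^ n)) z]
      = (n : ℂ) ^ 2 * f z ^ (n - 1) * g z ^ (n - 1)
        * (deriv f z * (deriv (deriv g) z + (n - 1 : ℂ) * (deriv g z) ^ 2 / g z)
          - deriv g z * (deriv (deriv f) z + (n - 1 : ℂ) * (deriv f z) ^ 2 / f z)) :=
  wronskian_jet_identity_general n U hU f g h hf hg hf' hg' hfz hgz heq
end
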